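/- Fix n ≥ 1, r > 0, and x⁰ ∈ ℝⁿ. Let f : ℝⁿ → ℝ be three times continuously differentiable on an open set containing the closed ball B_n(x⁰;r), with ∇²f Lipschitz continuous with constant L_H on B_n(x⁰;r). Define the second-order Taylor remainder R₂(x⁰+x) = f(x⁰+x) − f(x⁰) − ∇f(x⁰)ᵀx − (1/2) xᵀ ∇²f(x⁰) x, and define z ∈ ℝⁿ by z_i = ∫_{B_n(0;r)} x_i · R₂(x⁰+x) dx. Let V_{n+2} = 2π^{n/2+1} r^{n+2} / (Γ(n/2+1)(n+2)) and η = Γ((n+4)/2) / (√π · Γ((n+3)/2)). Then (2π / V_{n+2}) · ‖z‖ ≤ (√n / (3√π)) · L_H · η · r². -/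

import Mathlib

/-!
Write `R(x) = R₂(x⁰ + x)` and `w` for the vector `z`. Taylor's theorem with an `L_H`-Lipschitz
Hessian gives `|R(x)| ≤ L_H ‖x‖³ / 6`. By definition of `z`, `‖w‖² = ∫_B ⟪w, x⟫ R(x) dx`, so
Cauchy–Schwarz gives `‖w‖⁴ ≤ ∫_B ⟪w, x⟫² · ∫_B R²`. Reflections preserve the ball and act
transitively on each sphere, so `∫_B ⟪w, x⟫²` only depends on `‖w‖`; summing over an orthonormal
basis gives `n ∫_B ⟪w, x⟫² = ‖w‖² ∫_B ‖x‖²`. With the radial moments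
`∫_B ‖x‖ᵏ = n ω_n rⁿ⁺ᵏ / (n + k)` this yields `(2π / V_{n+2}) ‖z‖ ≤ √(n(n+2)/(n+6)) L_H r² / 6`,
and the log-convexity estimate `Γ(a + 1/2)² a ≤ Γ(a + 1)²` together with `π² ≤ 12` turns this
into the stated constant.
-/

open MeasureTheory Metric Set InnerProductSpace Module Real
open scoped NNReal RealInnerProductSpace

noncomputable section

/-- Interpret a plain vector in `Fin n → ℝ` as an element of Euclidean space,
so that `‖·‖` is the Euclidean norm. -/
def vecE {n : ℕ} (v : Fin n → ℝ) : EuclideanSpace ℝ (Fin n) :=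
  (EuclideanSpace.equiv (Fin n) ℝ).symm v

/-- The volume of the ball of radius `r` in `ℝ^{n+2}`:
`V_{n+2} = 2π^{n/2+1} r^{n+2} / (Γ(n/2+1)(n+2))`. -/
def Vnp2 (n : ℕ) (r : ℝ) : ℝ :=
  2 * Real.pi ^ ((n : ℝ) / 2 + 1) * r ^ (n + 2)
    / (Real.Gamma ((n : ℝ) / 2 + 1) * ((n : ℝ) + 2))

theorem Real.Gamma_add_half_sq_mul_le {a : ℝ} (ha : 0 < a) :
    Gamma (a + 1 / 2) ^ 2 * a ≤ Gamma (a + 1) ^ 2 := by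
  have hlogconv := Gamma_mul_add_mul_le_rpow_Gamma_mul_rpow_Gamma ha (by linarith : 0 < a + 1)
    one_half_pos one_half_pos (by norm_num)
  rw [← sqrt_eq_rpow, ← sqrt_eq_rpow, show 1 / 2 * a + 1 / 2 * (a + 1) = a + 1 / 2 by ring]
    at hlogconv
  calc Gamma (a + 1 / 2) ^ 2 * a ≤ (√(Gamma a) * √(Gamma (a + 1))) ^ 2 * a := by
        gcongr
    _ = Gamma a * a * Gamma (a + 1) := by
        rw [mul_pow, sq_sqrt (Gamma_pos_of_pos ha).le, sq_sqrt (Gamma_pos_of_pos (by linarith)).le]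
        ring
    _ = Gamma (a + 1) ^ 2 := by rw [Gamma_add_one ha.ne']; ring

theorem abs_le_of_abs_deriv_le_mul_pow {h h' : ℝ → ℝ} {c T : ℝ} {k : ℕ} (h0 : h 0 = 0)
    (hderiv : ∀ t ∈ Icc 0 T, HasDerivAt h (h' t) t)
    (hbound : ∀ t ∈ Icc 0 T, |h' t| ≤ c * t ^ k) :
    ∀ t ∈ Icc 0 T, |h t| ≤ c * t ^ (k + 1) / (k + 1) := by
  have hB : ∀ t, HasDerivAt (fun t => c * t ^ (k + 1) / (k + 1)) (c * t ^ k) t := fun t => by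
    refine (((hasDerivAt_pow (k + 1) t).const_mul c).div_const ((k : ℝ) + 1)).congr_deriv ?_
    rw [Nat.add_sub_cancel]
    push_cast
    field_simp
  refine image_norm_le_of_norm_deriv_right_le_deriv_boundary
    (fun t ht => (hderiv t ht).continuousAt.continuousWithinAt)
    (fun t ht => (hderiv t (Ico_subset_Icc_self ht)).hasDerivWithinAt) ?_ hB
    (fun t ht => hbound t (Ico_subset_Icc_self ht))
  simp [h0]

section Taylor

variable {E : Type*} [NormedAddCommGroup E] [InnerProductSpace ℝ E]

theorem LipschitzOnWith.abs_inner_apply_sub_le {H : E → E →L[ℝ] E} {s : Set E} {L : ℝ≥0}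
    (hH : LipschitzOnWith L H s) {y y' : E} (hy : y ∈ s) (hy' : y' ∈ s) (x : E) :
    |⟪H y x, x⟫ - ⟪H y' x, x⟫| ≤ L * dist y y' * ‖x‖ ^ 2 := by
  rw [← inner_sub_left, ← sub_apply]
  calc |⟪(H y - H y') x, x⟫| ≤ ‖H y - H y'‖ * ‖x‖ * ‖x‖ :=
        (abs_real_inner_le_norm _ _).trans (by gcongr; exact (H y - H y').le_opNorm x)
    _ ≤ L * dist y y' * ‖x‖ * ‖x‖ := by
        gcongr
        rw [← dist_eq_norm]
        exact hH.dist_le_mul y hy y' hy'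
    _ = L * dist y y' * ‖x‖ ^ 2 := by ring

variable [CompleteSpace E]

theorem ContDiffAt.differentiableAt_gradient {f : E → ℝ} {y : E} {n : WithTop ℕ∞}
    (hf : ContDiffAt ℝ n f y) (hn : 2 ≤ n) : DifferentiableAt ℝ (gradient f) y :=
  (toDual ℝ E).symm.toContinuousLinearEquiv.differentiableAt.comp y
    ((hf.fderiv_right (m := 1) (by simpa [one_add_one_eq_two] using hn)).differentiableAt
      one_ne_zero)

theorem abs_taylor_remainder_two_le {f : E → ℝ} {x₀ : E} {r : ℝ} {L : ℝ≥0}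
    (hf : ∀ y ∈ closedBall x₀ r, DifferentiableAt ℝ f y)
    (hgrad : ∀ y ∈ closedBall x₀ r, DifferentiableAt ℝ (gradient f) y)
    (hlip : LipschitzOnWith L (fderiv ℝ (gradient f)) (closedBall x₀ r))
    {x : E} (hx : ‖x‖ ≤ r) :
    |f (x₀ + x) - f x₀ - ⟪gradient f x₀, x⟫ - 1 / 2 * ⟪fderiv ℝ (gradient f) x₀ x, x⟫|
      ≤ L * ‖x‖ ^ 3 / 6 := by
  set H := fderiv ℝ (gradient f)
  set a := ⟪gradient f x₀, x⟫
  set b := ⟪H x₀ x, x⟫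
  have hseg : ∀ t ∈ Icc (0 : ℝ) 1, x₀ + t • x ∈ closedBall x₀ r := fun t ht => by
    rw [mem_closedBall, dist_eq_norm, add_sub_cancel_left, norm_smul, Real.norm_of_nonneg ht.1]
    nlinarith [norm_nonneg x, ht.2]
  have hline : ∀ t : ℝ, HasDerivAt (fun s : ℝ => x₀ + s • x) x t := fun t => by
    simpa using ((hasDerivAt_id t).smul_const x).const_add x₀
  have hdf : ∀ t ∈ Icc (0 : ℝ) 1,
      HasDerivAt (fun s => f (x₀ + s • x) - f x₀ - s * a - s ^ 2 / 2 * b)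
      (⟪gradient f (x₀ + t • x), x⟫ - a - t * b) t := fun t ht => by
    have := (hf _ (hseg t ht)).hasFDerivAt.comp_hasDerivAt t (hline t)
    rw [← inner_gradient_left] at this
    exact (((this.sub_const (f x₀)).sub ((hasDerivAt_id t).mul_const a)).sub
      ((hasDerivAt_pow 2 t).div_const 2 |>.mul_const b)).congr_deriv (by simp)
  have hdgrad : ∀ t ∈ Icc (0 : ℝ) 1, HasDerivAt (fun s => ⟪gradient f (x₀ + s • x), x⟫ - a - s * b)
      (⟪H (x₀ + t • x) x, x⟫ - b) t := fun t ht => by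
    have := ((hgrad _ (hseg t ht)).hasFDerivAt.comp_hasDerivAt t (hline t)).inner ℝ
      (hasDerivAt_const t x)
    exact ((this.sub_const a).sub ((hasDerivAt_id t).mul_const b)).congr_deriv (by simp [H])
  have hHess : ∀ t ∈ Icc (0 : ℝ) 1, |⟪H (x₀ + t • x) x, x⟫ - b| ≤ L * ‖x‖ ^ 3 * t ^ 1 :=
    fun t ht => by
      have := hlip.abs_inner_apply_sub_le (hseg t ht) (hseg 0 (by simp)) x
      rw [zero_smul, add_zero, dist_self_add_left, norm_smul, Real.norm_of_nonneg ht.1] at this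
      exact this.trans_eq (by ring)
  have hgradBound : ∀ t ∈ Icc (0 : ℝ) 1,
      |⟪gradient f (x₀ + t • x), x⟫ - a - t * b| ≤ L * ‖x‖ ^ 3 / 2 * t ^ 2 := fun t ht => by
    refine (abs_le_of_abs_deriv_le_mul_pow (by simp [a]) hdgrad hHess t ht).trans_eq ?_
    norm_num
    ring
  have hfBound := abs_le_of_abs_deriv_le_mul_pow (by simp) hdf hgradBound 1 (by simp)
  calc _ = |f (x₀ + (1 : ℝ) • x) - f x₀ - 1 * a - 1 ^ 2 / 2 * b| := by simp [H, a, b]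
    _ ≤ _ := hfBound
    _ = _ := by norm_num; ring

end Taylor

theorem setIntegral_closedBall_norm_pow {E : Type*} [NormedAddCommGroup E] [NormedSpace ℝ E]
    [FiniteDimensional ℝ E] [MeasurableSpace E] [BorelSpace E] [Nontrivial E]
    (μ : Measure E) [μ.IsAddHaarMeasure] (k : ℕ) {r : ℝ} (hr : 0 ≤ r) :
    ∫ x in closedBall (0 : E) r, ‖x‖ ^ k ∂μ
      = finrank ℝ E * μ.real (ball 0 1) * (r ^ (finrank ℝ E + k) / (finrank ℝ E + k)) := by
  set d := finrank ℝ E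
  have hd : 0 < d := finrank_pos
  have hball : ∫ x in closedBall (0 : E) r, ‖x‖ ^ k ∂μ
      = ∫ x, (Icc 0 r).indicator (fun t => t ^ k) ‖x‖ ∂μ := by
    rw [← integral_indicator measurableSet_closedBall]
    congr 1 with x
    simp only [indicator, mem_closedBall_zero_iff, mem_Icc, norm_nonneg, true_and]
  have hradial : ∫ t in Ioi (0 : ℝ), t ^ (d - 1) • (Icc 0 r).indicator (fun t => t ^ k) t
      = r ^ (d + k) / (d + k) := by
    calc _ = ∫ t in Ioc 0 r, t ^ (d - 1 + k) := by
          rw [← Ioi_inter_Iic, ← setIntegral_indicator measurableSet_Iic]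
          refine setIntegral_congr_fun measurableSet_Ioi fun t ht => ?_
          by_cases htr : t ≤ r
          · rw [indicator_of_mem (mem_Icc.2 ⟨ht.out.le, htr⟩), indicator_of_mem (mem_Iic.2 htr),
              smul_eq_mul, ← pow_add]
          · rw [indicator_of_notMem (fun h => htr h.2),
              indicator_of_notMem (show t ∉ Iic r from htr), smul_zero]
      _ = r ^ (d + k) / (d + k) := by
          have hdk : d - 1 + k + 1 = d + k := by omega
          rw [← intervalIntegral.integral_of_le hr, integral_pow, hdk, zero_pow (by omega),
            sub_zero]
          congr 1
          exact_mod_cast hdk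
  rw [hball, integral_fun_norm_addHaar μ, hradial, nsmul_eq_mul, smul_eq_mul, mul_assoc]

theorem sq_integral_mul_le_integral_sq_mul_integral_sq {α : Type*} [MeasurableSpace α]
    {μ : Measure α} {f g : α → ℝ} (hf : Integrable (fun x => f x ^ 2) μ)
    (hg : Integrable (fun x => g x ^ 2) μ) (hfg : Integrable (fun x => f x * g x) μ) :
    (∫ x, f x * g x ∂μ) ^ 2 ≤ (∫ x, f x ^ 2 ∂μ) * ∫ x, g x ^ 2 ∂μ := by
  have hquad : ∀ t : ℝ, 0 ≤ (∫ x, f x ^ 2 ∂μ) * (t * t) + 2 * (∫ x, f x * g x ∂μ) * t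
      + ∫ x, g x ^ 2 ∂μ := fun t => by
    have hexp : ∫ x, (t * f x + g x) ^ 2 ∂μ = (∫ x, f x ^ 2 ∂μ) * (t * t)
        + 2 * (∫ x, f x * g x ∂μ) * t + ∫ x, g x ^ 2 ∂μ := by
      have hpt : ∀ x, (t * f x + g x) ^ 2 = t * t * f x ^ 2 + 2 * t * (f x * g x) + g x ^ 2 :=
        fun x => by ring
      simp_rw [hpt]
      have h12 : Integrable (fun x => t * t * f x ^ 2 + 2 * t * (f x * g x)) μ :=
        (hf.const_mul _).add (hfg.const_mul _)
      rw [integral_add h12 hg,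
        integral_add (hf.const_mul _) (hfg.const_mul _), integral_const_mul, integral_const_mul]
      ring
    rw [← hexp]
    exact integral_nonneg fun x => sq_nonneg _
  have := discrim_le_zero hquad
  rw [discrim] at this
  linarith

section Ball

variable {E : Type*} [NormedAddCommGroup E] [InnerProductSpace ℝ E] [FiniteDimensional ℝ E]
  [MeasurableSpace E] [BorelSpace E]

theorem LinearIsometryEquiv.setIntegral_closedBall_comp (T : E ≃ₗᵢ[ℝ] E) (g : E → ℝ) (r : ℝ) :
    ∫ x in closedBall (0 : E) r, g (T x) = ∫ x in closedBall (0 : E) r, g x := by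
  simpa using T.measurePreserving.setIntegral_preimage_emb
    T.toHomeomorph.measurableEmbedding g (closedBall 0 r)

theorem setIntegral_closedBall_inner_sq_eq_of_norm_eq {v w : E} (h : ‖v‖ = ‖w‖) (r : ℝ) :
    ∫ x in closedBall (0 : E) r, ⟪v, x⟫ ^ 2 = ∫ x in closedBall (0 : E) r, ⟪w, x⟫ ^ 2 := by
  set ρ := (ℝ ∙ (v - w))ᗮ.reflection
  have hρ : ∀ x, ⟪w, x⟫ = ⟪v, ρ x⟫ := fun x => by
    rw [← Submodule.reflection_sub h, ← ρ.inner_map_map, Submodule.reflection_reflection]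
  simp_rw [hρ]
  exact (ρ.setIntegral_closedBall_comp (fun x => ⟪v, x⟫ ^ 2) r).symm

theorem finrank_mul_setIntegral_closedBall_inner_sq (w : E) (r : ℝ) :
    finrank ℝ E * ∫ x in closedBall (0 : E) r, ⟪w, x⟫ ^ 2
      = ‖w‖ ^ 2 * ∫ x in closedBall (0 : E) r, ‖x‖ ^ 2 := by
  set b := stdOrthonormalBasis ℝ E
  have hint : ∀ v : E, IntegrableOn (fun x => ⟪v, x⟫ ^ 2) (closedBall (0 : E) r) := fun v =>
    (continuous_const.inner continuous_id).pow 2 |>.continuousOn.integrableOn_compact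
      (isCompact_closedBall 0 r)
  have hsum : ∀ x : E, ‖w‖ ^ 2 * ‖x‖ ^ 2 = ∑ i, ⟪‖w‖ • b i, x⟫ ^ 2 := fun x => by
    rw [← b.sum_sq_inner_right x, Finset.mul_sum]
    simp only [real_inner_smul_left, mul_pow]
  calc _ = ∑ _i : Fin (finrank ℝ E), ∫ x in closedBall (0 : E) r, ⟪w, x⟫ ^ 2 := by simp
    _ = ∑ i, ∫ x in closedBall (0 : E) r, ⟪‖w‖ • b i, x⟫ ^ 2 := by
        congr with i
        exact setIntegral_closedBall_inner_sq_eq_of_norm_eq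
          (by rw [norm_smul, b.orthonormal.1 i, mul_one, norm_norm]) r
    _ = ∫ x in closedBall (0 : E) r, ‖w‖ ^ 2 * ‖x‖ ^ 2 := by
        rw [← integral_finsetSum _ fun i _ => hint _]
        simp_rw [hsum]
    _ = _ := integral_const_mul _ _

theorem setIntegral_closedBall_sq_le_of_abs_le {R : E → ℝ} {C r : ℝ}
    (hR : ContinuousOn R (closedBall 0 r))
    (hRle : ∀ x ∈ closedBall (0 : E) r, |R x| ≤ C * ‖x‖ ^ 3) :
    ∫ x in closedBall (0 : E) r, R x ^ 2 ≤ C ^ 2 * ∫ x in closedBall (0 : E) r, ‖x‖ ^ 6 := by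
  rw [← integral_const_mul]
  have hcont : Continuous fun x : E => C ^ 2 * ‖x‖ ^ 6 := by fun_prop
  refine setIntegral_mono_on (hR.pow 2 |>.integrableOn_compact (isCompact_closedBall 0 r))
    (hcont.continuousOn.integrableOn_compact (isCompact_closedBall 0 r)) measurableSet_closedBall
    fun x hx => ?_
  calc R x ^ 2 = |R x| ^ 2 := (sq_abs _).symm
    _ ≤ (C * ‖x‖ ^ 3) ^ 2 := by gcongr; exact hRle x hx
    _ = C ^ 2 * ‖x‖ ^ 6 := by ring

theorem finrank_mul_norm_sq_le_of_setIntegral_inner_mul_eq {R : E → ℝ} {C r : ℝ}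
    (hR : ContinuousOn R (closedBall 0 r))
    (hRle : ∀ x ∈ closedBall (0 : E) r, |R x| ≤ C * ‖x‖ ^ 3) {w : E}
    (hw : ∫ x in closedBall (0 : E) r, ⟪w, x⟫ * R x = ‖w‖ ^ 2) :
    finrank ℝ E * ‖w‖ ^ 2 ≤ (∫ x in closedBall (0 : E) r, ‖x‖ ^ 2)
      * (C ^ 2 * ∫ x in closedBall (0 : E) r, ‖x‖ ^ 6) := by
  have hint : ∀ {g : E → ℝ}, ContinuousOn g (closedBall 0 r) → IntegrableOn g (closedBall 0 r) :=
    fun hg => hg.integrableOn_compact (isCompact_closedBall 0 r)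
  have hinner : ContinuousOn (fun x : E => ⟪w, x⟫) (closedBall 0 r) :=
    (continuous_const.inner continuous_id).continuousOn
  have hM2 : 0 ≤ ∫ x in closedBall (0 : E) r, ‖x‖ ^ 2 := integral_nonneg fun _ => by positivity
  have hRsq := setIntegral_closedBall_sq_le_of_abs_le hR hRle
  have hCS := sq_integral_mul_le_integral_sq_mul_integral_sq (hint (hinner.pow 2)) (hint (hR.pow 2))
    (hint (hinner.mul hR))
  rw [hw] at hCS
  have hRHS : 0 ≤ (∫ x in closedBall (0 : E) r, ‖x‖ ^ 2)
      * (C ^ 2 * ∫ x in closedBall (0 : E) r, ‖x‖ ^ 6) :=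
    mul_nonneg hM2 ((integral_nonneg fun _ => sq_nonneg _).trans hRsq)
  rcases (sq_nonneg ‖w‖).eq_or_lt with hw0 | hwpos
  · rw [← hw0, mul_zero]
    exact hRHS
  refine le_of_mul_le_mul_right ?_ hwpos
  calc finrank ℝ E * ‖w‖ ^ 2 * ‖w‖ ^ 2 = finrank ℝ E * (‖w‖ ^ 2) ^ 2 := by ring
    _ ≤ finrank ℝ E * ((∫ x in closedBall (0 : E) r, ⟪w, x⟫ ^ 2)
          * ∫ x in closedBall (0 : E) r, R x ^ 2) := by gcongr
    _ = ‖w‖ ^ 2 * (∫ x in closedBall (0 : E) r, ‖x‖ ^ 2)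
          * ∫ x in closedBall (0 : E) r, R x ^ 2 := by
        rw [← mul_assoc, finrank_mul_setIntegral_closedBall_inner_sq]
    _ ≤ ‖w‖ ^ 2 * (∫ x in closedBall (0 : E) r, ‖x‖ ^ 2)
          * (C ^ 2 * ∫ x in closedBall (0 : E) r, ‖x‖ ^ 6) := by gcongr
    _ = _ := by ring

end Ball

theorem integral_inner_vecE_mul {n : ℕ} {μ : Measure (EuclideanSpace ℝ (Fin n))}
    {R : EuclideanSpace ℝ (Fin n) → ℝ} (hR : ∀ i, Integrable (fun x => x i * R x) μ)
    (z : Fin n → ℝ) :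
    ∫ x, ⟪vecE z, x⟫ * R x ∂μ = ∑ i, z i * ∫ x, x i * R x ∂μ := by
  simp_rw [← integral_const_mul]
  rw [← integral_finsetSum _ fun i _ => (hR i).const_mul (z i)]
  congr with x
  simp [vecE, PiLp.inner_apply, Finset.mul_sum, mul_comm, mul_left_comm]

theorem two_pi_div_Vnp2 {n : ℕ} (hn : 1 ≤ n) (r : ℝ) :
    2 * π / Vnp2 n r
      = (n + 2) / (volume.real (ball (0 : EuclideanSpace ℝ (Fin n)) 1) * r ^ (n + 2)) := by
  have : Nonempty (Fin n) := ⟨⟨0, hn⟩⟩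
  have hpow : π ^ ((n : ℝ) / 2 + 1) = √π ^ n * π := by
    rw [rpow_add pi_pos, rpow_one, sqrt_eq_rpow, ← rpow_natCast, ← rpow_mul pi_pos.le]
    ring_nf
  rw [Vnp2, hpow, measureReal_def, EuclideanSpace.volume_ball, Fintype.card_fin,
    ENNReal.toReal_mul, ENNReal.toReal_pow, ENNReal.toReal_ofReal zero_le_one,
    ENNReal.toReal_ofReal (by positivity), one_pow]
  field_simp

theorem le_sq_mul_Gamma_ratio {x : ℝ} (hx : 0 ≤ x) :
    x * (x + 2) / (x + 6) / 36
      ≤ (√x / (3 * √π) * (Gamma ((x + 4) / 2) / (√π * Gamma ((x + 3) / 2)))) ^ 2 := by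
  have hGamma := Gamma_add_half_sq_mul_le (a := (x + 2) / 2) (by positivity)
  rw [show (x + 2) / 2 + 1 / 2 = (x + 3) / 2 by ring, show (x + 2) / 2 + 1 = (x + 4) / 2 by ring]
    at hGamma
  have hπ : π ^ 2 ≤ 2 * x + 12 := by nlinarith [pi_lt_d2, pi_pos]
  have hRHS : (√x / (3 * √π) * (Gamma ((x + 4) / 2) / (√π * Gamma ((x + 3) / 2)))) ^ 2
      = x * Gamma ((x + 4) / 2) ^ 2 / (9 * π ^ 2 * Gamma ((x + 3) / 2) ^ 2) := by
    rw [mul_pow, div_pow, div_pow, mul_pow, mul_pow, sq_sqrt hx, sq_sqrt pi_pos.le]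
    field_simp
    ring
  rw [hRHS, div_div, div_le_div_iff₀ (by positivity) (by positivity)]
  linarith [mul_le_mul_of_nonneg_left hGamma (by positivity : 0 ≤ 9 * x * π ^ 2),
    mul_le_mul_of_nonneg_left hπ (by positivity : 0 ≤ 18 * x * Gamma ((x + 4) / 2) ^ 2)]

theorem two_pi_div_Vnp2_mul_le {n : ℕ} (hn : 1 ≤ n) {r L s : ℝ} (hr : 0 < r) (hL : 0 ≤ L)
    (hs : n * s ^ 2
      ≤ n * volume.real (ball (0 : EuclideanSpace ℝ (Fin n)) 1) * (r ^ (n + 2) / (n + 2))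
      * ((L / 6) ^ 2
        * (n * volume.real (ball (0 : EuclideanSpace ℝ (Fin n)) 1) * (r ^ (n + 6) / (n + 6))))) :
    2 * π / Vnp2 n r * s
      ≤ √n / (3 * √π) * L * (Gamma ((n + 4) / 2) / (√π * Gamma ((n + 3) / 2))) * r ^ 2 := by
  set ω := volume.real (ball (0 : EuclideanSpace ℝ (Fin n)) 1)
  have hω : 0 < ω :=
    ENNReal.toReal_pos (measure_ball_pos volume 0 one_pos).ne' measure_ball_lt_top.ne
  have hs' : s ^ 2
      ≤ ω * r ^ (n + 2) / (n + 2) * ((L / 6) ^ 2 * (n * ω * (r ^ (n + 6) / (n + 6)))) :=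
    le_of_mul_le_mul_left (hs.trans_eq (by ring)) (by positivity)
  rw [two_pi_div_Vnp2 hn]
  refine le_of_pow_le_pow_left₀ two_ne_zero (by positivity) ?_
  calc ((n + 2) / (ω * r ^ (n + 2)) * s) ^ 2 = ((n + 2) / (ω * r ^ (n + 2))) ^ 2 * s ^ 2 := by ring
    _ ≤ ((n + 2) / (ω * r ^ (n + 2))) ^ 2
        * (ω * r ^ (n + 2) / (n + 2) * ((L / 6) ^ 2 * (n * ω * (r ^ (n + 6) / (n + 6))))) := by
        gcongr
    _ = n * (n + 2) / (n + 6) / 36 * (L * r ^ 2) ^ 2 := by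
        field_simp
        ring
    _ ≤ (√n / (3 * √π) * (Gamma ((n + 4) / 2) / (√π * Gamma ((n + 3) / 2)))) ^ 2
        * (L * r ^ 2) ^ 2 := by
        gcongr
        exact le_sq_mul_Gamma_ratio n.cast_nonneg
    _ = _ := by ring

/-- Lemma 5.8 of the paper: with `zᵢ = ∫_{Bₙ(0;r)} xᵢ·R₂(x⁰+x) dx`, where `R₂`
is the second-order Taylor remainder of `f` at `x⁰`, and
`η = Γ((n+4)/2)/(√π·Γ((n+3)/2))`, one has
`(2π/V_{n+2})·‖z‖ ≤ (√n/(3√π))·L_H·η·r²`. -/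
theorem ball_remainder_bound
    (n : ℕ) (hn : 1 ≤ n) (r : ℝ) (hr : 0 < r)
    (x0 : EuclideanSpace ℝ (Fin n))
    (f : EuclideanSpace ℝ (Fin n) → ℝ)
    (U : Set (EuclideanSpace ℝ (Fin n))) (hU : IsOpen U)
    (hsub : Metric.closedBall x0 r ⊆ U)
    (hf : ContDiffOn ℝ 3 f U)
    (LH : NNReal)
    (hlip : LipschitzOnWith LH (fun x => fderiv ℝ (gradient f) x)
      (Metric.closedBall x0 r))
    (z : Fin n → ℝ)
    (hz : ∀ i, z i = ∫ x in Metric.closedBall (0 : EuclideanSpace ℝ (Fin n)) r,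
        x i * (f (x0 + x) - f x0 - (inner ℝ (gradient f x0) x : ℝ)
          - (1 / 2) * (inner ℝ (fderiv ℝ (gradient f) x0 x) x : ℝ))) :
    (2 * Real.pi / Vnp2 n r) * ‖vecE z‖
      ≤ (Real.sqrt n / (3 * Real.sqrt Real.pi)) * (LH : ℝ)
          * (Real.Gamma (((n : ℝ) + 4) / 2)
              / (Real.sqrt Real.pi * Real.Gamma (((n : ℝ) + 3) / 2)))
          * r ^ 2 := by
  have : Nonempty (Fin n) := ⟨⟨0, hn⟩⟩
  set R : EuclideanSpace ℝ (Fin n) → ℝ := fun x => f (x0 + x) - f x0 - ⟪gradient f x0, x⟫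
    - 1 / 2 * ⟪fderiv ℝ (gradient f) x0 x, x⟫
  have hfC : ∀ y ∈ closedBall x0 r, ContDiffAt ℝ 3 f y :=
    fun y hy => hf.contDiffAt (hU.mem_nhds (hsub hy))
  have hRle : ∀ x ∈ closedBall 0 r, |R x| ≤ LH / 6 * ‖x‖ ^ 3 := fun x hx =>
    (abs_taylor_remainder_two_le (fun y hy => (hfC y hy).differentiableAt (by norm_num))
      (fun y hy => (hfC y hy).differentiableAt_gradient (by norm_num)) hlip
      (mem_closedBall_zero_iff.1 hx)).trans_eq (by ring)
  have hRcont : ContinuousOn R (closedBall 0 r) :=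
    (((hf.continuousOn.comp (continuous_const.add continuous_id).continuousOn
      fun x hx => hsub (by simpa using hx)).sub continuousOn_const).sub (by fun_prop)).sub
      (by fun_prop)
  have hself : ∫ x in closedBall 0 r, ⟪vecE z, x⟫ * R x = ‖vecE z‖ ^ 2 := by
    rw [integral_inner_vecE_mul fun i => ((PiLp.continuous_apply 2 _ i).continuousOn.mul
      hRcont).integrableOn_compact (isCompact_closedBall 0 r), EuclideanSpace.real_norm_sq_eq]
    simp only [vecE, sq]
    exact Finset.sum_congr rfl fun i _ => congrArg (z i * ·) (hz i).symm
  have hmain := finrank_mul_norm_sq_le_of_setIntegral_inner_mul_eq hRcont hRle hself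
  rw [setIntegral_closedBall_norm_pow volume 2 hr.le,
    setIntegral_closedBall_norm_pow volume 6 hr.le, finrank_euclideanSpace_fin] at hmain
  exact two_pi_div_Vnp2_mul_le hn hr LH.coe_nonneg hmain

end
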